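/- arXiv:2009.13644 — 6 statements merged into one kernel-verified Lean document; each statement's English description precedes it below -/
import Mathlib

section
/- Let q be a prime power with q ≥ n, let w_0,...,w_{q-1} be distinct elements of GF(q), and for each m-subset a of {0,...,n-1} define χ(a) = (e_1(a),...,e_d(a)) where e_k(a) is the k-th elementary symmetric polynomial of the field elements {w_i : i ∈ a}. If 1 ≤ d < min(m, n-m), then χ is a proper vertex coloring of J^d(n,m): any two distinct m-subsets a, b with |a ∩ b| ≥ m - d have χ(a) ≠ χ(b). -/
/-!
Encode an `m`-set `a` by the polynomial `∏_{i ∈ a} (X - w i)`. By Vieta, its coefficients in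
degrees `≥ m - d` are `±e_k(a)` for `k ≤ d`, so if `a` and `b` have the same colour, the
difference of their polynomials has degree `< m - d`. Both polynomials are divisible by the
product over `a ∩ b`, of degree `|a ∩ b| ≥ m - d`, so they coincide, and comparing roots
gives `a = b`.
-/

namespace Multiset

open Polynomial

variable {R : Type*}

theorem degree_prod_X_sub_C_sub_prod_X_sub_C_lt [CommRing R] [Nontrivial R]
    {s t : Multiset R} {d : ℕ}
    (hcard : card s = card t) (h : ∀ k ∈ Finset.Icc 1 d, s.esymm k = t.esymm k) :
    ((s.map fun r => X - C r).prod - (t.map fun r => X - C r).prod).degree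
      < ↑(card s - d) := by
  rw [degree_lt_iff_coeff_zero]
  intro j hj
  rw [coeff_sub, sub_eq_zero]
  rcases le_or_gt j (card s) with hjs | hsj
  · rw [prod_X_sub_C_coeff s hjs, prod_X_sub_C_coeff t (hcard ▸ hjs), ← hcard]
    rcases Nat.eq_zero_or_pos (card s - j) with hk | hk
    · simp [hk, esymm]
    · rw [h _ (Finset.mem_Icc.mpr ⟨hk, by omega⟩)]
  · rw [coeff_eq_zero_of_natDegree_lt (by rwa [natDegree_multiset_prod_X_sub_C_eq_card]),
      coeff_eq_zero_of_natDegree_lt (by rwa [natDegree_multiset_prod_X_sub_C_eq_card, ← hcard])]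

theorem eq_of_esymm_eq_of_le_of_le [CommRing R] [IsDomain R] {s t u : Multiset R} {d : ℕ}
    (hus : u ≤ s) (hut : u ≤ t) (hcard : card s = card t) (hu : card s - d ≤ card u)
    (h : ∀ k ∈ Finset.Icc 1 d, s.esymm k = t.esymm k) : s = t := by
  have hdvd : (u.map fun r => X - C r).prod ∣
      (s.map fun r => X - C r).prod - (t.map fun r => X - C r).prod :=
    dvd_sub (prod_dvd_prod_of_le (map_le_map hus)) (prod_dvd_prod_of_le (map_le_map hut))
  have hdeg : ((s.map fun r => X - C r).prod - (t.map fun r => X - C r).prod).degree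
      < (u.map fun r => X - C r).prod.degree :=
    calc _ < ((card s - d : ℕ) : WithBot ℕ) := degree_prod_X_sub_C_sub_prod_X_sub_C_lt hcard h
      _ ≤ ((card u : ℕ) : WithBot ℕ) := by exact_mod_cast hu
      _ = _ := by
        rw [degree_eq_natDegree (monic_multiset_prod_of_monic u _ fun r _ =>
          monic_X_sub_C r).ne_zero, natDegree_multiset_prod_X_sub_C_eq_card]
  rw [← roots_multiset_prod_X_sub_C s, ← roots_multiset_prod_X_sub_C t,
    sub_eq_zero.mp (eq_zero_of_dvd_of_degree_lt hdvd hdeg)]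

end Multiset

open Polynomial in
theorem stmt7_general (n m d : ℕ) (F : Type*) [Field F]
    (w : Fin n → F) (hw : Function.Injective w)
    (a b : Finset (Fin n)) (ha : a.card = m) (hb : b.card = m) (hne : a ≠ b)
    (hadj : m - d ≤ (a ∩ b).card) :
    ∃ k ∈ Finset.Icc 1 d,
      (∑ S ∈ a.powersetCard k, ∏ i ∈ S, w i) ≠ (∑ S ∈ b.powersetCard k, ∏ i ∈ S, w i) := by
  by_contra! hcolour
  refine hne (Finset.val_injective (Multiset.map_injective hw ?_))
  refine Multiset.eq_of_esymm_eq_of_le_of_le (u := (a ∩ b).val.map w)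
    (Multiset.map_le_map (Finset.val_le_iff.mpr Finset.inter_subset_left))
    (Multiset.map_le_map (Finset.val_le_iff.mpr Finset.inter_subset_right))
    (by simp only [Multiset.card_map, Finset.card_val, ha, hb])
    (by simpa only [Multiset.card_map, Finset.card_val, ha] using hadj) fun k hk => ?_
  simpa only [Finset.esymm_map_val] using hcolour k hk

/-- Graham–Sloane style coloring: with `F` a finite field of cardinality `q ≥ n`
and `w : Fin n → F` injective (distinct field elements `w_0, ..., w_{n-1}`),
the vector of the first `d` elementary symmetric functions of `{w_i : i ∈ a}`
is a proper coloring of `J^d(n,m)` when `1 ≤ d < min m (n - m)`: adjacent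
vertices differ in some coordinate `k ∈ [1, d]`. -/
theorem stmt7 (n m d : ℕ) (F : Type*) [Field F] [Fintype F]
    (hq : n ≤ Fintype.card F) (w : Fin n → F) (hw : Function.Injective w)
    (hd1 : 1 ≤ d) (hd : d < min m (n - m))
    (a b : Finset (Fin n)) (ha : a.card = m) (hb : b.card = m) (hne : a ≠ b)
    (hadj : m - d ≤ (a ∩ b).card) :
    ∃ k ∈ Finset.Icc 1 d,
      (∑ S ∈ a.powersetCard k, ∏ i ∈ S, w i) ≠ (∑ S ∈ b.powersetCard k, ∏ i ∈ S, w i) :=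
  stmt7_general n m d F w hw a b ha hb hne hadj
end

section
/- If a and b are distinct m-element subsets of an n-set with |a ∩ b| ≥ m - d where d < m, and all elementary symmetric polynomials of orders 1 through d of the elements of a (viewed as distinct elements of a field F) equal the corresponding elementary symmetric polynomials of the elements of b, then a = b. Equivalently: 2γ pairwise distinct elements of a field cannot all be roots of a monic polynomial of degree γ when γ ≥ 1. -/
/-!
Write `P s = ∏ x ∈ s, (X - C x)`. By Vieta, agreement of `e₁, …, e_d` forces
`deg (P a - P b) < m - d ≤ #(a ∩ b)`. Since `P a - P b = (P (a \ b) - P (b \ a)) * P (a ∩ b)`,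
this leaves `P (a \ b) = P (b \ a)`; comparing roots gives `a \ b = b \ a`, so `a = b`.
-/

open Polynomial

theorem Finset.esymm_val_eq_sum_powersetCard {R : Type*} [CommSemiring R] (s : Finset R) (k : ℕ) :
    s.val.esymm k = ∑ t ∈ s.powersetCard k, ∏ x ∈ t, x := by
  simpa using s.esymm_map_val id k

theorem Multiset.degree_prod_X_sub_C_sub_lt_of_esymm_eq {R : Type*} [CommRing R]
    {s t : Multiset R} {m d : ℕ} (hs : card s = m) (ht : card t = m)
    (h : ∀ k ≤ d, s.esymm k = t.esymm k) :
    ((s.map fun x => X - C x).prod - (t.map fun x => X - C x).prod).degree < ↑(m - d) := by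
  nontriviality R
  rw [degree_lt_iff_coeff_zero]
  intro j hj
  rw [coeff_sub, sub_eq_zero]
  rcases le_or_gt j m with hjm | hmj
  · rw [prod_X_sub_C_coeff s (hs ▸ hjm), prod_X_sub_C_coeff t (ht ▸ hjm), hs, ht,
      h _ (by omega)]
  · rw [coeff_eq_zero_of_natDegree_lt, coeff_eq_zero_of_natDegree_lt] <;>
      simpa only [natDegree_multiset_prod_X_sub_C_eq_card, hs, ht]

theorem eq_of_sdiff_eq_sdiff_swap {α : Type*} [GeneralizedBooleanAlgebra α] {x y : α}
    (h : x \ y = y \ x) : x = y := by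
  have hxy : x \ y = ⊥ := by
    rw [← disjoint_self]
    nth_rw 2 [h]
    exact disjoint_sdiff_sdiff
  exact le_antisymm (sdiff_eq_bot_iff.mp hxy) (sdiff_eq_bot_iff.mp (h ▸ hxy))

namespace Finset

variable {R : Type*} [CommRing R] [DecidableEq R]

theorem prod_X_sub_C_sub_prod_X_sub_C (a b : Finset R) :
    ∏ x ∈ a, (X - C x) - ∏ x ∈ b, (X - C x) =
      (∏ x ∈ a \ b, (X - C x) - ∏ x ∈ b \ a, (X - C x)) * ∏ x ∈ a ∩ b, (X - C x) := by
  rw [← prod_inter_mul_prod_sdiff a b, ← prod_inter_mul_prod_sdiff b a, inter_comm b a]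
  ring

theorem eq_of_degree_prod_X_sub_C_sub_lt [IsDomain R] {a b : Finset R}
    (h : (∏ x ∈ a, (X - C x) - ∏ x ∈ b, (X - C x)).degree < (#(a ∩ b) : WithBot ℕ)) :
    a = b := by
  have hprod : ∏ x ∈ a \ b, (X - C x) = ∏ x ∈ b \ a, (X - C x) := by
    by_contra hne
    rw [prod_X_sub_C_sub_prod_X_sub_C, degree_mul, degree_eq_natDegree (sub_ne_zero.mpr hne),
      degree_eq_natDegree (monic_prod_X_sub_C _ _).ne_zero,
      natDegree_finsetProd_X_sub_C_eq_card] at h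
    norm_cast at h
    omega
  refine eq_of_sdiff_eq_sdiff_swap (val_injective ?_)
  rw [← roots_prod_X_sub_C, hprod, roots_prod_X_sub_C]

end Finset

theorem stmt8_general (F : Type*) [Field F] [DecidableEq F] (m d : ℕ)
    (a b : Finset F) (ha : a.card = m) (hb : b.card = m)
    (hint : m - d ≤ (a ∩ b).card)
    (he : ∀ k ∈ Finset.Icc 1 d,
      (∑ S ∈ a.powersetCard k, ∏ x ∈ S, x) = (∑ S ∈ b.powersetCard k, ∏ x ∈ S, x)) :
    a = b := by
  have hesymm : ∀ k ≤ d, a.val.esymm k = b.val.esymm k := by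
    intro k hk
    rcases k.eq_zero_or_pos with rfl | hk0
    · simp [Multiset.esymm]
    · simpa only [Finset.esymm_val_eq_sum_powersetCard] using
        he k (Finset.mem_Icc.mpr ⟨hk0, hk⟩)
  refine Finset.eq_of_degree_prod_X_sub_C_sub_lt ?_
  exact (Multiset.degree_prod_X_sub_C_sub_lt_of_esymm_eq ha hb hesymm).trans_le
    (by exact_mod_cast hint)

/-- If `a` and `b` are `m`-subsets of a field `F` with `|a ∩ b| ≥ m - d` where
`d < m`, and the elementary symmetric polynomials of orders `1` through `d` of
the elements of `a` agree with those of `b`, then `a = b`. -/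
theorem stmt8 (F : Type*) [Field F] [DecidableEq F] (m d : ℕ) (hdm : d < m)
    (a b : Finset F) (ha : a.card = m) (hb : b.card = m)
    (hint : m - d ≤ (a ∩ b).card)
    (he : ∀ k ∈ Finset.Icc 1 d,
      (∑ S ∈ a.powersetCard k, ∏ x ∈ S, x) = (∑ S ∈ b.powersetCard k, ∏ x ∈ S, x)) :
    a = b :=
  stmt8_general F m d a b ha hb hint he
end

section
/- Let n = a + b + c + r with a ≥ 2, b ≥ 2, c ≤ ⌊n/2⌋ - 2. For every c-element subset C of Z_n, every element y ∈ Z_n \ C, and every parity value M ∈ {0,1}, there exist a-element subsets A, A' of Z_n \ C with (Σ A) ≡ (Σ A') ≡ M (mod 2), y ∈ A, and y ∉ A'. (The parity-of-sum protocol is safe.) -/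
/-!
Remove `C` and `y` from `Z_n`: at least `n - c - 1 > ⌈n/2⌉` elements remain, so two of them,
`z` and `z'`, have different parities. Any `(k-1)`-set avoiding `z, z'` extends by `z` or by `z'`
to a `k`-set whose sum has a prescribed parity; take `k = a - 1` and add `y` for `A`, `k = a` for `A'`.
-/

open Finset

theorem Fin.exists_mod_two_ne_of_card_gt {n : ℕ} {S : Finset (Fin n)}
    (hS : (n + 1) / 2 < #S) : ∃ z ∈ S, ∃ z' ∈ S, (z : ℕ) % 2 ≠ (z' : ℕ) % 2 := by
  by_contra! hsame
  obtain ⟨z₀, hz₀⟩ := card_pos.mp (by omega : 0 < #S)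
  -- on a set of constant parity, halving is injective
  have hinj : Set.InjOn (fun x : Fin n => (x : ℕ) / 2) S := by
    intro u hu v hv huv
    have := hsame u hu z₀ hz₀
    have := hsame v hv z₀ hz₀
    exact Fin.ext (by simp only at huv; omega)
  have hmaps : ∀ x ∈ S, (x : ℕ) / 2 ∈ range ((n + 1) / 2) := fun x _ => by
    have := x.isLt
    rw [mem_range]
    omega
  have := card_le_card_of_injOn _ hmaps hinj
  rw [card_range] at this
  omega

theorem Finset.exists_subset_card_eq_sum_mod_two {α : Type*} [DecidableEq α] (f : α → ℕ)
    {T : Finset α} {z z' : α} (hz : z ∈ T) (hz' : z' ∈ T) (hpar : f z % 2 ≠ f z' % 2)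
    {k : ℕ} (hk : 1 ≤ k) (hkT : k + 1 ≤ #T) (m : ℕ) :
    ∃ B ⊆ T, #B = k ∧ (∑ x ∈ B, f x) % 2 = m % 2 := by
  have hzz' : z ≠ z' := fun h => hpar (by rw [h])
  have hcard : #((T.erase z).erase z') = #T - 2 := by
    rw [card_erase_of_mem (mem_erase.mpr ⟨hzz'.symm, hz'⟩), card_erase_of_mem hz]
    omega
  obtain ⟨E, hE, hEcard⟩ := exists_subset_card_eq (s := (T.erase z).erase z') (n := k - 1)
    (by omega)
  have hzE : z ∉ E := fun h => (mem_erase.mp (mem_of_mem_erase (hE h))).1 rfl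
  have hz'E : z' ∉ E := fun h => (mem_erase.mp (hE h)).1 rfl
  have hET : E ⊆ T := hE.trans ((erase_subset _ _).trans (erase_subset _ _))
  have extend : ∀ u ∈ T, u ∉ E → (f u + ∑ x ∈ E, f x) % 2 = m % 2 →
      ∃ B ⊆ T, #B = k ∧ (∑ x ∈ B, f x) % 2 = m % 2 := fun u hu huE hsum =>
    ⟨insert u E, insert_subset hu hET, by rw [card_insert_of_notMem huE]; omega,
      by rwa [sum_insert huE]⟩
  by_cases hsum : (f z + ∑ x ∈ E, f x) % 2 = m % 2
  · exact extend z hz hzE hsum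
  · exact extend z' hz' hz'E (by omega)

/-- The parity-of-sum protocol is safe: with `n = a + b + c + r`, `a, b ≥ 2` and
`c ≤ ⌊n/2⌋ - 2`, for every `c`-subset `C`, every `y ∉ C` and every parity `M`,
there are `a`-subsets `A, A'` avoiding `C` with sums of parity `M`, `y ∈ A`,
and `y ∉ A'`. -/
theorem stmt10 (n a b c r : ℕ) (hsum : n = a + b + c + r) (ha : 2 ≤ a) (hb : 2 ≤ b)
    (hc : c ≤ n / 2 - 2) (C : Finset (Fin n)) (hC : C.card = c)
    (y : Fin n) (hy : y ∉ C) (M : ℕ) (hM : M < 2) :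
    ∃ A A' : Finset (Fin n), A.card = a ∧ A'.card = a ∧ Disjoint A C ∧ Disjoint A' C ∧
      (∑ x ∈ A, (x : ℕ)) % 2 = M ∧ (∑ x ∈ A', (x : ℕ)) % 2 = M ∧ y ∈ A ∧ y ∉ A' := by
  set T := Cᶜ.erase y
  have hTcard : #T = n - c - 1 := by
    rw [card_erase_of_mem (by simpa using hy), card_compl, hC, Fintype.card_fin]
  have hTC : Disjoint T C := disjoint_compl_left.mono_left (erase_subset _ _)
  have hyT : y ∉ T := notMem_erase _ _
  obtain ⟨z, hz, z', hz', hpar⟩ := Fin.exists_mod_two_ne_of_card_gt (S := T) (by omega)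
  obtain ⟨B, hBT, hBcard, hBsum⟩ := exists_subset_card_eq_sum_mod_two (fun x : Fin n => (x : ℕ))
    hz hz' hpar (k := a - 1) (by omega) (by omega) (M + y)
  obtain ⟨A', hA'T, hA'card, hA'sum⟩ := exists_subset_card_eq_sum_mod_two (fun x : Fin n => (x : ℕ))
    hz hz' hpar (k := a) (by omega) (by omega) M
  have hyB : y ∉ B := fun h => hyT (hBT h)
  refine ⟨insert y B, A', ?_, hA'card, ?_, hTC.mono_left hA'T, ?_, ?_, mem_insert_self _ _,
    fun h => hyT (hA'T h)⟩
  · rw [card_insert_of_notMem hyB]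
    omega
  · exact disjoint_insert_left.mpr ⟨hy, hTC.mono_left hBT⟩
  · rw [sum_insert hyB]
    omega
  · rw [hA'sum, Nat.mod_eq_of_lt hM]
end

section
/- Let 2 ≤ m ≤ n/2. For every residue M ∈ Z_n and every x ∈ Z_n, there exists an m-element subset a of Z_n with Σ_{t∈a} t ≡ M (mod n) such that a contains m-1 consecutive residues (mod n) starting at either x or x+1. (I.e., a is either {x, x+1, ..., x+m-2, r} or {x+1, ..., x+m-1, r'} for some additional element.) -/
/-! Let `I` be the block of `m - 1` consecutive residues starting at `x` and `I'` the one starting at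
`x + 1`, so that `∑ I' = ∑ I + (m - 1)`. Completing `I` by `r = M - ∑ I` works unless `r ∈ I`; in that
case completing `I'` by `r - (m - 1)` works, because `r - (m - 1)` lies in the `m - 1` residues just
below `x + 1`, which are disjoint from `I'` as long as `2 (m - 1) < n`. -/

open Finset

variable {n : ℕ}

def cyclicInterval (x : ZMod n) (k : ℕ) : Finset (ZMod n) :=
  (range k).image fun i : ℕ => x + i

lemma natCast_injOn_Iio : Set.InjOn (Nat.cast : ℕ → ZMod n) (Set.Iio n) := by
  intro a ha b hb h
  rwa [ZMod.natCast_eq_natCast_iff', Nat.mod_eq_of_lt ha, Nat.mod_eq_of_lt hb] at h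

lemma add_natCast_injOn_range (x : ZMod n) {k : ℕ} (hk : k ≤ n) :
    Set.InjOn (fun i : ℕ => x + i) (range k) := by
  intro a ha b hb h
  simp only [coe_range, Set.mem_Iio] at ha hb
  exact natCast_injOn_Iio (by simp; omega) (by simp; omega) (add_left_cancel h)

lemma card_cyclicInterval (x : ZMod n) {k : ℕ} (hk : k ≤ n) : #(cyclicInterval x k) = k := by
  rw [cyclicInterval, card_image_of_injOn (add_natCast_injOn_range x hk), card_range]

lemma sum_cyclicInterval (x : ZMod n) {k : ℕ} (hk : k ≤ n) :
    ∑ t ∈ cyclicInterval x k, t = ∑ i ∈ range k, (x + i) :=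
  sum_image (add_natCast_injOn_range x hk)

lemma sum_cyclicInterval_add_one (x : ZMod n) {k : ℕ} (hk : k ≤ n) :
    ∑ t ∈ cyclicInterval (x + 1) k, t = ∑ t ∈ cyclicInterval x k, t + (k : ZMod n) := by
  simp only [sum_cyclicInterval _ hk, add_right_comm x 1, sum_add_distrib, sum_const, card_range,
    nsmul_one]

lemma sub_notMem_cyclicInterval_add_one {x r : ZMod n} {k : ℕ} (hk : 2 * k < n)
    (hr : r ∈ cyclicInterval x k) : r - (k : ZMod n) ∉ cyclicInterval (x + 1) k := by
  simp only [cyclicInterval, mem_image, mem_range] at hr ⊢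
  rintro ⟨j, hj, hjr⟩
  obtain ⟨i, hi, rfl⟩ := hr
  have hcast : ((j + k + 1 : ℕ) : ZMod n) = i := by
    push_cast
    linear_combination hjr
  have := natCast_injOn_Iio (by simp; omega) (by simp; omega) hcast
  omega

lemma sub_sum_notMem_cyclicInterval_or (M x : ZMod n) {k : ℕ} (hk : 2 * k < n) :
    M - ∑ t ∈ cyclicInterval x k, t ∉ cyclicInterval x k ∨
      M - ∑ t ∈ cyclicInterval (x + 1) k, t ∉ cyclicInterval (x + 1) k := by
  rw [or_iff_not_imp_left, not_not, sum_cyclicInterval_add_one x (by omega), ← sub_sub]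
  exact sub_notMem_cyclicInterval_add_one hk

lemma exists_insert_sum_eq {G : Type*} [AddCommGroup G] [DecidableEq G] {s : Finset G} {M : G}
    (h : M - ∑ t ∈ s, t ∉ s) :
    ∃ a : Finset G, #a = #s + 1 ∧ ∑ t ∈ a, t = M ∧ ∃ r, a = insert r s :=
  ⟨insert _ s, card_insert_of_notMem h, by rw [sum_insert h, sub_add_cancel], _, rfl⟩

/-- For `2 ≤ m ≤ n/2`, every residue `M` is the element-sum of some `m`-subset
of `Z_n` consisting of `m - 1` consecutive residues starting at `x` or at
`x + 1`, together with one additional element. -/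
theorem stmt11 (n m : ℕ) (hm : 2 ≤ m) (hmn : 2 * m ≤ n) (M x : ZMod n) :
    ∃ a : Finset (ZMod n), a.card = m ∧ (∑ t ∈ a, t) = M ∧
      ((∃ r : ZMod n, a = insert r ((Finset.range (m - 1)).image (fun i : ℕ => x + (i : ZMod n)))) ∨
       (∃ r : ZMod n, a = insert r ((Finset.range (m - 1)).image (fun i : ℕ => x + 1 + (i : ZMod n))))) := by
  have hcard : ∀ y : ZMod n, #(cyclicInterval y (m - 1)) + 1 = m := fun y => by
    rw [card_cyclicInterval y (by omega)]
    omega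
  obtain h | h := sub_sum_notMem_cyclicInterval_or M x (k := m - 1) (by omega)
  · obtain ⟨a, ha, hsum, r, rfl⟩ := exists_insert_sum_eq h
    exact ⟨_, ha.trans (hcard x), hsum, Or.inl ⟨r, rfl⟩⟩
  · obtain ⟨a, ha, hsum, r, rfl⟩ := exists_insert_sum_eq h
    exact ⟨_, ha.trans (hcard (x + 1)), hsum, Or.inr ⟨r, rfl⟩⟩
end

section
/- Let n = a + c + b with a ≥ 2, c ≥ 0, and a + c < n/2. Let C be a c-subset of Z_n, let A be an a-subset of Z_n disjoint from C, and let z_1, z_2 be distinct elements of A. Then there exist y_1, y_2 ∉ A ∪ C with y_1 ≠ y_2 and y_1 + y_2 ≡ z_1 + z_2 (mod n); consequently A' = (A \ {z_1,z_2}) ∪ {y_1,y_2} is an a-subset disjoint from C ∪ {z_1,z_2} with the same element-sum mod n as A. -/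
/-!
Put `B = A ∪ C` and `s = z₁ + z₂`. A pair `y, s - y` avoiding `B` with `y ≠ s - y` exists
unless every `y` lies in `B`, in `s - B`, or among the solutions of `2y = s`. In a cyclic
group there are at most two such solutions, and `B ∩ (s - B)` contains `z₁` and `z₂`, so
these exceptional `y` number at most `(2|B| - 2) + 2 = 2(a + c) < n`.
-/

open Finset

section Exchange

variable {α : Type*} [DecidableEq α] {A C P Q : Finset α}

theorem card_sdiff_union_of_disjoint (hP : P ⊆ A) (hQ : Disjoint A Q) (hPQ : #P = #Q) :
    #(A \ P ∪ Q) = #A := by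
  rw [card_union_of_disjoint (hQ.mono_left sdiff_subset), card_sdiff_of_subset hP, ← hPQ,
    Nat.sub_add_cancel (card_le_card hP)]

theorem sum_sdiff_union_of_disjoint {M : Type*} [AddCommMonoid M] {f : α → M} (hP : P ⊆ A)
    (hQ : Disjoint A Q) (hPQ : ∑ x ∈ P, f x = ∑ x ∈ Q, f x) :
    ∑ x ∈ A \ P ∪ Q, f x = ∑ x ∈ A, f x := by
  rw [sum_union (hQ.mono_left sdiff_subset), ← hPQ, sum_sdiff hP]

theorem disjoint_sdiff_union_union (hP : P ⊆ A) (hAC : Disjoint A C)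
    (hQ : Disjoint (A ∪ C) Q) : Disjoint (A \ P ∪ Q) (C ∪ P) := by
  rw [disjoint_union_left] at hQ
  rw [disjoint_union_left, disjoint_union_right, disjoint_union_right]
  exact ⟨⟨hAC.mono_left sdiff_subset, sdiff_disjoint⟩, hQ.2.symm, (hQ.1.mono_left hP).symm⟩

end Exchange

section CyclicGroup

variable {G : Type*} [AddCommGroup G] [Fintype G] [DecidableEq G] [IsAddCyclic G]

theorem IsAddCyclic.card_add_self_eq_le (s : G) : #{t : G | t + t = s} ≤ 2 := by
  obtain ⟨t₀, ht₀⟩ | hempty := ({t : G | t + t = s} : Finset G).eq_empty_or_nonempty.symm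
  · calc #{t : G | t + t = s}
        ≤ #{x : G | 2 • x = 0} := by
          refine card_le_card_of_injOn (· - t₀) (fun t ht => ?_)
            (fun _ _ _ _ h => sub_left_injective h)
          simp only [coe_filter, mem_filter, mem_univ, true_and, Set.mem_ofPred_eq] at ht ht₀ ⊢
          rw [two_nsmul, sub_add_sub_comm, ht, ht₀, sub_self]
      _ ≤ 2 := IsAddCyclic.card_nsmul_eq_zero_le two_pos
  · simp [hempty]

theorem IsAddCyclic.exists_ne_notMem_add_eq {B : Finset G} {z₁ z₂ : G}
    (hz₁ : z₁ ∈ B) (hz₂ : z₂ ∈ B) (hne : z₁ ≠ z₂) (hB : 2 * #B < Fintype.card G) :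
    ∃ y₁ y₂, y₁ ≠ y₂ ∧ y₁ ∉ B ∧ y₂ ∉ B ∧ y₁ + y₂ = z₁ + z₂ := by
  set s := z₁ + z₂
  set R := B.image (s - ·)
  set K : Finset G := {t | t + t = s}
  have hR : #R = #B := card_image_of_injective _ sub_right_injective
  have hzR : {z₁, z₂} ⊆ B ∩ R := by
    intro x hx
    simp only [mem_insert, mem_singleton] at hx
    rcases hx with rfl | rfl
    · exact mem_inter.2 ⟨hz₁, mem_image.2 ⟨z₂, hz₂, by simp [s]⟩⟩
    · exact mem_inter.2 ⟨hz₂, mem_image.2 ⟨z₁, hz₁, by simp [s]⟩⟩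
  have hunion : #(B ∪ R) + 2 ≤ 2 * #B := by
    have hinter := card_le_card hzR
    rw [card_pair hne] at hinter
    have := card_union_add_card_inter B R
    omega
  obtain ⟨y, hy⟩ : ∃ y, y ∉ B ∪ R ∪ K := by
    by_contra! hcover
    have hle := card_union_le (B ∪ R) K
    rw [eq_univ_of_forall hcover, card_univ] at hle
    have hK : #K ≤ 2 := IsAddCyclic.card_add_self_eq_le s
    omega
  simp only [mem_union, mem_image, K, mem_filter, not_or, not_exists, not_and, R] at hy
  obtain ⟨⟨hyB, hyR⟩, hys⟩ := hy
  exact ⟨y, s - y, fun h => hys (mem_univ y) (eq_sub_iff_add_eq.1 h), hyB,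
    fun h => hyR _ h (sub_sub_cancel s y), add_sub_cancel y s⟩

end CyclicGroup

theorem stmt13_general (n a c : ℕ)
    (hac : 2 * (a + c) < n)
    (C A : Finset (ZMod n)) (hC : C.card = c) (hA : A.card = a)
    (hdisj : Disjoint A C)
    (z₁ z₂ : ZMod n) (hz1 : z₁ ∈ A) (hz2 : z₂ ∈ A) (hzne : z₁ ≠ z₂) :
    ∃ y₁ y₂ : ZMod n, y₁ ≠ y₂ ∧ y₁ ∉ A ∪ C ∧ y₂ ∉ A ∪ C ∧ y₁ + y₂ = z₁ + z₂ ∧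
      ((A \ {z₁, z₂}) ∪ {y₁, y₂}).card = a ∧
      Disjoint ((A \ {z₁, z₂}) ∪ {y₁, y₂}) (C ∪ {z₁, z₂}) ∧
      (∑ t ∈ (A \ {z₁, z₂}) ∪ {y₁, y₂}, t) = ∑ t ∈ A, t := by
  have : NeZero n := ⟨by omega⟩
  have hB : 2 * #(A ∪ C) < Fintype.card (ZMod n) := by
    rw [card_union_of_disjoint hdisj, ZMod.card]
    omega
  obtain ⟨y₁, y₂, hyne, hy₁, hy₂, hsum⟩ :=
    IsAddCyclic.exists_ne_notMem_add_eq (mem_union_left C hz1) (mem_union_left C hz2) hzne hB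
  have hP : {z₁, z₂} ⊆ A := insert_subset hz1 (singleton_subset_iff.2 hz2)
  have hQ : Disjoint (A ∪ C) {y₁, y₂} := by simp [disjoint_insert_right, hy₁, hy₂]
  have hQA : Disjoint A {y₁, y₂} := hQ.mono_left subset_union_left
  refine ⟨y₁, y₂, hyne, hy₁, hy₂, hsum, ?_, disjoint_sdiff_union_union hP hdisj hQ, ?_⟩
  · rw [card_sdiff_union_of_disjoint hP hQA (by rw [card_pair hzne, card_pair hyne]), hA]
  · exact sum_sdiff_union_of_disjoint hP hQA (by rw [sum_pair hzne, sum_pair hyne, hsum])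

/-- Shifting lemma: with `n = a + c + b`, `a ≥ 2` and `a + c < n/2`, given a
`c`-set `C`, an `a`-set `A ⊆ Z_n` disjoint from `C`, and distinct `z₁, z₂ ∈ A`,
there are distinct `y₁, y₂ ∉ A ∪ C` with `y₁ + y₂ = z₁ + z₂`; consequently
`A' = (A \ {z₁,z₂}) ∪ {y₁,y₂}` is an `a`-set disjoint from `C ∪ {z₁,z₂}` with
the same element-sum mod `n` as `A`. -/
theorem stmt13 (n a b c : ℕ) (hn : n = a + c + b) (ha : 2 ≤ a)
    (hac : 2 * (a + c) < n)
    (C A : Finset (ZMod n)) (hC : C.card = c) (hA : A.card = a)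
    (hdisj : Disjoint A C)
    (z₁ z₂ : ZMod n) (hz1 : z₁ ∈ A) (hz2 : z₂ ∈ A) (hzne : z₁ ≠ z₂) :
    ∃ y₁ y₂ : ZMod n, y₁ ≠ y₂ ∧ y₁ ∉ A ∪ C ∧ y₂ ∉ A ∪ C ∧ y₁ + y₂ = z₁ + z₂ ∧
      ((A \ {z₁, z₂}) ∪ {y₁, y₂}).card = a ∧
      Disjoint ((A \ {z₁, z₂}) ∪ {y₁, y₂}) (C ∪ {z₁, z₂}) ∧
      (∑ t ∈ (A \ {z₁, z₂}) ∪ {y₁, y₂}, t) = ∑ t ∈ A, t :=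
  stmt13_general n a c hac C A hC hA hdisj z₁ z₂ hz1 hz2 hzne
end

section
/- Suppose d = c + r ≥ min(a, n-a) - 1, c ≥ 1, and a ≥ 2, where n ≥ a. Then there is no safe proper coloring of J^d(n,a). Specifically: in J^d(n,a) with d = min(a, n-a) - 1, two a-subsets are adjacent iff they intersect; a safe coloring requires two distinct hands of the same color sharing a common card, contradicting properness; and when d ≥ min(a, n-a), J^d(n,a) is complete so a proper coloring determines the hand uniquely. -/
/-!
Safety produces two distinct hands of one colour, so properness forbids them to meet in
`a - (c + r)` cards. If `a ≤ c + r` that is no restriction at all. If `a > c + r + 1`, the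
bound on `d` forces `b = 1`, and two hands avoiding the eavesdropper's `c` cards lie in
`a + r + 1` cards, hence share `a - r - 1 ≥ a - (c + r)` of them. In the remaining case
`a = c + r + 1` same-coloured hands must merely be disjoint, and they are not: safety first
moves a card `y` outside `A` into a hand `A₁` of the colour of `A`, then, with `y` given to the
eavesdropper, moves another card `w` of `A₁` into a hand `B` of that colour avoiding `y`;
`A₁ ≠ B` share `w`.
-/

open Finset

section

variable {α M : Type*} [Fintype α] [DecidableEq α]

def IsSafe (a c : ℕ) (P : Finset α → M) : Prop :=
  ∀ γ : Finset α, γ.card = c → ∀ y ∉ γ,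
    ∀ A : Finset α, A.card = a → Disjoint A γ →
      ∃ A₁ A₂ : Finset α, A₁.card = a ∧ A₂.card = a ∧
        Disjoint A₁ γ ∧ Disjoint A₂ γ ∧ P A₁ = P A ∧ P A₂ = P A ∧ y ∈ A₁ ∧ y ∉ A₂

theorem Finset.exists_card_eq_disjoint (s : Finset α) {k : ℕ} (h : k + #s ≤ Fintype.card α) :
    ∃ t : Finset α, #t = k ∧ Disjoint s t := by
  obtain ⟨t, hts, ht⟩ := exists_subset_card_eq (s := sᶜ) (n := k) (by rw [card_compl]; omega)
  exact ⟨t, ht, disjoint_of_subset_right hts disjoint_compl_right⟩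

namespace IsSafe

variable {a c : ℕ} {P : Finset α → M}

theorem exists_ne_card_inter (hP : IsSafe a c P) (ha : 1 ≤ a)
    (hn : a + c ≤ Fintype.card α) :
    ∃ A₁ A₂ : Finset α, #A₁ = a ∧ #A₂ = a ∧ A₁ ≠ A₂ ∧ P A₁ = P A₂ ∧
      2 * a ≤ #(A₁ ∩ A₂) + (Fintype.card α - c) := by
  obtain ⟨A, -, hA⟩ := exists_subset_card_eq (s := (univ : Finset α)) (n := a)
    (by rw [card_univ]; omega)
  obtain ⟨γ, hγ, hAγ⟩ := A.exists_card_eq_disjoint (k := c) (by omega)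
  obtain ⟨y, hy⟩ := card_pos.mp (hA ▸ ha : 0 < #A)
  obtain ⟨A₁, A₂, hA₁, hA₂, hA₁γ, hA₂γ, hP₁, hP₂, hyA₁, hyA₂⟩ :=
    hP γ hγ y (disjoint_left.mp hAγ hy) A hA hAγ
  have hunion : #(A₁ ∪ A₂) ≤ Fintype.card α - c := by
    rw [← hγ, ← card_compl]
    exact card_le_card (subset_compl_iff_disjoint_right.mpr (disjoint_union_left.mpr ⟨hA₁γ, hA₂γ⟩))
  refine ⟨A₁, A₂, hA₁, hA₂, fun h ↦ hyA₂ (h ▸ hyA₁), hP₁.trans hP₂.symm, ?_⟩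
  have := card_union_add_card_inter A₁ A₂
  omega

theorem exists_mem (hP : IsSafe a c P) {A : Finset α} (hA : #A = a) {y : α} (hy : y ∉ A)
    (hn : a + c < Fintype.card α) :
    ∃ A₁ : Finset α, #A₁ = a ∧ P A₁ = P A ∧ y ∈ A₁ := by
  obtain ⟨γ, hγ, hγA⟩ := (insert y A).exists_card_eq_disjoint (k := c)
    (by rw [card_insert_of_notMem hy]; omega)
  obtain ⟨A₁, -, hA₁, -, -, -, hP₁, -, hyA₁, -⟩ :=
    hP γ hγ y (disjoint_left.mp hγA (mem_insert_self y A)) A hA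
      (disjoint_of_subset_left (subset_insert y A) hγA)
  exact ⟨A₁, hA₁, hP₁, hyA₁⟩

theorem exists_mem_notMem (hP : IsSafe a c P) (hc : 1 ≤ c) {A : Finset α} (hA : #A = a)
    {y w : α} (hy : y ∉ A) (hwy : w ≠ y) (hn : a + c < Fintype.card α) :
    ∃ B : Finset α, #B = a ∧ P B = P A ∧ w ∈ B ∧ y ∉ B := by
  obtain ⟨δ, hδ, hδA⟩ := (insert w (insert y A)).exists_card_eq_disjoint (k := c - 1)
    (by grw [card_insert_le, card_insert_of_notMem hy]; omega)
  have hyδ : y ∉ δ := disjoint_left.mp hδA (mem_insert_of_mem (mem_insert_self y A))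
  have hγ : #(insert y δ) = c := by rw [card_insert_of_notMem hyδ]; omega
  have hwγ : w ∉ insert y δ := by
    simpa [hwy] using fun h ↦ disjoint_right.mp hδA h (mem_insert_self w _)
  have hAγ : Disjoint A (insert y δ) :=
    disjoint_insert_right.mpr ⟨hy, disjoint_of_subset_left (by grind) hδA⟩
  obtain ⟨B, -, hB, -, hBγ, -, hPB, -, hwB, -⟩ := hP _ hγ w hwγ A hA hAγ
  exact ⟨B, hB, hPB, hwB, disjoint_right.mp hBγ (mem_insert_self y δ)⟩

theorem exists_ne_inter_nonempty (hP : IsSafe a c P) (ha : 2 ≤ a) (hc : 1 ≤ c)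
    (hn : a + c < Fintype.card α) :
    ∃ A₁ B : Finset α, #A₁ = a ∧ #B = a ∧ A₁ ≠ B ∧ P A₁ = P B ∧ (A₁ ∩ B).Nonempty := by
  obtain ⟨A, -, hA⟩ := exists_subset_card_eq (s := (univ : Finset α)) (n := a)
    (by rw [card_univ]; omega)
  obtain ⟨y, hy⟩ : (Aᶜ).Nonempty := card_pos.mp (by rw [card_compl]; omega)
  rw [mem_compl] at hy
  obtain ⟨A₁, hA₁, hP₁, hyA₁⟩ := hP.exists_mem hA hy hn
  obtain ⟨w, hw, hwy⟩ := exists_mem_ne (by omega : 1 < #A₁) y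
  obtain ⟨B, hB, hPB, hwB, hyB⟩ := hP.exists_mem_notMem hc hA hy hwy hn
  exact ⟨A₁, B, hA₁, hB, fun h ↦ hyB (h ▸ hyA₁), hP₁.trans hPB.symm, w, mem_inter.mpr ⟨hw, hwB⟩⟩

end IsSafe

end

/-- If `d = c + r ≥ min(a, n-a) - 1`, `c ≥ 1`, `a ≥ 2` (with `n = a + b + c + r`,
`b ≥ 1`), then there is no coloring `P` of the `a`-subsets of an `n`-set that is
both a proper coloring of `J^{c+r}(n,a)` and safe against an eavesdropper
holding `c` cards. -/
theorem stmt14 (n a b c r : ℕ) (hn : n = a + b + c + r) (hb : 1 ≤ b)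
    (ha : 2 ≤ a) (hc : 1 ≤ c) (hd : min a (n - a) - 1 ≤ c + r)
    (M : Type*) (P : Finset (Fin n) → M)
    (hproper : ∀ A B : Finset (Fin n), A.card = a → B.card = a → A ≠ B →
      a - (c + r) ≤ (A ∩ B).card → P A ≠ P B)
    (hsafe : ∀ γ : Finset (Fin n), γ.card = c → ∀ y ∉ γ,
      ∀ A : Finset (Fin n), A.card = a → Disjoint A γ →
        ∃ A₁ A₂ : Finset (Fin n), A₁.card = a ∧ A₂.card = a ∧
          Disjoint A₁ γ ∧ Disjoint A₂ γ ∧ P A₁ = P A ∧ P A₂ = P A ∧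
          y ∈ A₁ ∧ y ∉ A₂) :
    False := by
  have hP : IsSafe a c P := hsafe
  have hcard : Fintype.card (Fin n) = n := Fintype.card_fin n
  by_cases hdisj : a = c + r + 1
  · obtain ⟨A, B, hA, hB, hne, hPAB, hAB⟩ := hP.exists_ne_inter_nonempty ha hc (by omega)
    exact hproper A B hA hB hne (by have := hAB.card_pos; omega) hPAB
  · obtain ⟨A, B, hA, hB, hne, hPAB, hAB⟩ := hP.exists_ne_card_inter (by omega) (by omega)
    exact hproper A B hA hB hne (by omega) hPAB
end
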